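/- Let η > 0, κ ∈ ℝ^{n×n} with κ_ij > 0, r, c ∈ Δ^n, U ∈ ℝ^{d×k}, and initial α^{(0)}, β^{(0)} ∈ ℝ^n. Define the Sinkhorn iteration: ζ^{(ℓ)} = ζ_η((α^{(ℓ)}, β^{(ℓ)}, U), κ), α^{(ℓ+1)} = α^{(ℓ)} − η log r + η log(ζ^{(ℓ)}1); ζ^{(ℓ+1/2)} = ζ_η((α^{(ℓ+1)}, β^{(ℓ)}, U), κ), β^{(ℓ+1)} = β^{(ℓ)} − η log c + η log((ζ^{(ℓ+1/2)})^T 1); and set π^{(ℓ)} = ζ^{(ℓ)}/‖ζ^{(ℓ)}‖₁. Then for every ℓ ≥ 0, L_η((α^{(ℓ+1)}, β^{(ℓ+1)}, U), κ) ≤ L_η((α^{(ℓ)}, β^{(ℓ)}, U), κ) − (η/2)( ‖π^{(ℓ)}1 − r‖₁² + ‖π^{(ℓ+1)}1 − r‖₁² ). -/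

import Mathlib

/-!
The row step of the Sinkhorn iteration rescales the rows of `ζ` to sum to `r`, the column step
rescales its columns to sum to `c`; after either step `ζ` has mass one. Each step decreases `L_η`
by exactly `η` times the relative entropy of the target marginal with respect to the current one,
and Pinsker's inequality bounds this from below by `η / 2` times the squared `ℓ¹` residual. After
the column step the row residual is at most the column residual of the half step, because the row
sums were exact there. The column step is the row step of the transposed problem (`x ↔ y`,
`α ↔ β`, `r ↔ c`, `κ ↦ κᵀ`), since `C(U)` is invariant under the swap.

Pinsker's inequality comes from the pointwise bound `t log t - t + 1 ≥ 3 (t - 1)² / (2 (t + 2))`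
and Sedrakyan's form of Cauchy–Schwarz with the weights `2 (p + 2 q) / 3`, which sum to `2`.
-/

open scoped BigOperators
open Matrix

noncomputable section

namespace PRWPaper

/-- Squared Euclidean norm of a vector in `ℝ^d`. -/
def sqnorm {d : ℕ} (v : Fin d → ℝ) : ℝ := ∑ l, (v l) ^ 2

/-- `‖Uᵀ w‖²  = ⟨w wᵀ, U Uᵀ⟩` for `U ∈ ℝ^{d×k}`, `w ∈ ℝ^d`. -/
def projSq {d k : ℕ} (U : Matrix (Fin d) (Fin k) ℝ) (w : Fin d → ℝ) : ℝ :=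
  ∑ m, (∑ l, U l m * w l) ^ 2

/-- `C_ij = ‖x_i - y_j‖²`. -/
def costC {n d : ℕ} (x y : Fin n → Fin d → ℝ) (i j : Fin n) : ℝ :=
  sqnorm (fun l => x i l - y j l)

/-- `[C(U)]_ij = ‖Uᵀ (x_i - y_j)‖² = ⟨M_ij, U Uᵀ⟩`. -/
def costCU {n d k : ℕ} (x y : Fin n → Fin d → ℝ) (U : Matrix (Fin d) (Fin k) ℝ)
    (i j : Fin n) : ℝ :=
  projSq U (fun l => x i l - y j l)

/-- `‖C‖_∞ = max_{i,j} |C_ij|`. -/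
def CInf {n d : ℕ} (x y : Fin n → Fin d → ℝ) : ℝ :=
  ⨆ p : Fin n × Fin n, |costC x y p.1 p.2|

/-- `φ_ij(α, β, U) = α_i + β_j + ⟨M_ij, U Uᵀ⟩`. -/
def phi {n d k : ℕ} (x y : Fin n → Fin d → ℝ) (α β : Fin n → ℝ)
    (U : Matrix (Fin d) (Fin k) ℝ) (i j : Fin n) : ℝ :=
  α i + β j + costCU x y U i j

/-- `min_{i,j} φ_ij(α, β, U)`. -/
def phiMin {n d k : ℕ} (x y : Fin n → Fin d → ℝ) (α β : Fin n → ℝ)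
    (U : Matrix (Fin d) (Fin k) ℝ) : ℝ :=
  ⨅ p : Fin n × Fin n, phi x y α β U p.1 p.2

/-- Membership in the (relatively open) simplex `Δ^n`. -/
def inSimplex {n : ℕ} (r : Fin n → ℝ) : Prop :=
  (∑ i, r i) = 1 ∧ ∀ i, 0 < r i

/-- Membership in the transportation polytope `Π(r, c)`. -/
def inPlans {n : ℕ} (r c : Fin n → ℝ) (π : Matrix (Fin n) (Fin n) ℝ) : Prop :=
  (∀ i, ∑ j, π i j = r i) ∧ (∀ j, ∑ i, π i j = c j) ∧ ∀ i j, 0 ≤ π i j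

/-- `ℓ₁` norm of a matrix. -/
def l1norm {n : ℕ} (A : Matrix (Fin n) (Fin n) ℝ) : ℝ := ∑ i, ∑ j, |A i j|

/-- `ζ_η(x, κ)_ij = κ_ij exp(-φ_ij(x)/η)`. -/
def zeta {n d k : ℕ} (η : ℝ) (κ : Matrix (Fin n) (Fin n) ℝ) (x y : Fin n → Fin d → ℝ)
    (α β : Fin n → ℝ) (U : Matrix (Fin d) (Fin k) ℝ) : Matrix (Fin n) (Fin n) ℝ :=
  fun i j => κ i j * Real.exp (-(phi x y α β U i j) / η)

/-- `L_η((α,β,U), κ) = rᵀα + cᵀβ + η log ‖ζ_η((α,β,U),κ)‖₁`. -/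
def Lfun {n d k : ℕ} (η : ℝ) (κ : Matrix (Fin n) (Fin n) ℝ) (r c : Fin n → ℝ)
    (x y : Fin n → Fin d → ℝ) (α β : Fin n → ℝ) (U : Matrix (Fin d) (Fin k) ℝ) : ℝ :=
  (∑ i, r i * α i) + (∑ j, c j * β j) + η * Real.log (l1norm (zeta η κ x y α β U))

/-- `π_η(x, κ) = ζ_η(x,κ)/‖ζ_η(x,κ)‖₁`. -/
def piEta {n d k : ℕ} (η : ℝ) (κ : Matrix (Fin n) (Fin n) ℝ) (x y : Fin n → Fin d → ℝ)
    (α β : Fin n → ℝ) (U : Matrix (Fin d) (Fin k) ℝ) : Matrix (Fin n) (Fin n) ℝ :=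
  fun i j => zeta η κ x y α β U i j / l1norm (zeta η κ x y α β U)

/-- Entropy `H(π) = -Σ_ij π_ij log π_ij` (with the convention `0 log 0 = 0`,
which holds since `Real.log 0 = 0`). -/
def entropy {n : ℕ} (π : Matrix (Fin n) (Fin n) ℝ) : ℝ :=
  -∑ i, ∑ j, π i j * Real.log (π i j)

/-- `h(π, U) = ⟨C(U) - η log κ, π⟩ - η H(π)`. -/
def hObj {n d k : ℕ} (η : ℝ) (κ : Matrix (Fin n) (Fin n) ℝ) (x y : Fin n → Fin d → ℝ)
    (U : Matrix (Fin d) (Fin k) ℝ) (π : Matrix (Fin n) (Fin n) ℝ) : ℝ :=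
  (∑ i, ∑ j, (costCU x y U i j - η * Real.log (κ i j)) * π i j) - η * entropy π

/-- `‖π 1 - r‖₁`, the row-sum feasibility residual. -/
def rowRes {n : ℕ} (r : Fin n → ℝ) (π : Matrix (Fin n) (Fin n) ℝ) : ℝ :=
  ∑ i, |(∑ j, π i j) - r i|

/-- `‖πᵀ 1 - c‖₁`, the column-sum feasibility residual. -/
def colRes {n : ℕ} (c : Fin n → ℝ) (π : Matrix (Fin n) (Fin n) ℝ) : ℝ :=
  ∑ j, |(∑ i, π i j) - c j|

/-- Variation seminorm `‖v‖_var = max_i v_i - min_i v_i` of a vector. -/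
def varVec {n : ℕ} (v : Fin n → ℝ) : ℝ := (⨆ i, v i) - (⨅ i, v i)

/-- `‖log κ‖_var = max_{ij} log κ_ij - min_{ij} log κ_ij`. -/
def varLog {n : ℕ} (κ : Matrix (Fin n) (Fin n) ℝ) : ℝ :=
  (⨆ p : Fin n × Fin n, Real.log (κ p.1 p.2)) - (⨅ p : Fin n × Fin n, Real.log (κ p.1 p.2))

/-- `‖log κ‖_∞ = max_{ij} |log κ_ij|`. -/
def logInf {n : ℕ} (κ : Matrix (Fin n) (Fin n) ℝ) : ℝ :=
  ⨆ p : Fin n × Fin n, |Real.log (κ p.1 p.2)|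

/-- Frobenius norm of a matrix. -/
def frobNorm {d k : ℕ} (A : Matrix (Fin d) (Fin k) ℝ) : ℝ :=
  Real.sqrt (∑ l, ∑ m, (A l m) ^ 2)

/-- `V_π = Σ_ij π_ij M_ij` with `M_ij = (x_i - y_j)(x_i - y_j)ᵀ`. -/
def Vmat {n d : ℕ} (x y : Fin n → Fin d → ℝ) (π : Matrix (Fin n) (Fin n) ℝ) :
    Matrix (Fin d) (Fin d) ℝ :=
  fun l l' => ∑ i, ∑ j, π i j * ((x i l - y j l) * (x i l' - y j l'))

/-- Projection onto the tangent space of the Stiefel manifold at `U`: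
`Proj_{T_U S}(A) = A - U (UᵀA + AᵀU)/2`. -/
def projTan {d k : ℕ} (U A : Matrix (Fin d) (Fin k) ℝ) : Matrix (Fin d) (Fin k) ℝ :=
  A - (1 / 2 : ℝ) • (U * (Uᵀ * A + Aᵀ * U))

/-- Transport plan `(u_i A_ij v_j)_{ij}` normalized to total mass one. -/
def sinkMat {n : ℕ} (A : Matrix (Fin n) (Fin n) ℝ) (u v : Fin n → ℝ) :
    Matrix (Fin n) (Fin n) ℝ :=
  fun i j => u i * A i j * v j / (∑ i', ∑ j', u i' * A i' j' * v j')

open Real Finset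

def relEntropy {ι : Type*} [Fintype ι] (p q : ι → ℝ) : ℝ := ∑ i, p i * log (p i / q i)

lemma hasDerivAt_log_sub_rational {t : ℝ} (ht : 0 < t) :
    HasDerivAt (fun s => log s - (s - 1) * (5 * s + 1) / (2 * s * (s + 2)))
      ((t - 1) ^ 3 / (t ^ 2 * (t + 2) ^ 2)) t := by
  have hden : 2 * t * (t + 2) ≠ 0 := by positivity
  have h := (hasDerivAt_log ht.ne').sub
    ((((hasDerivAt_id t).sub_const 1).mul (((hasDerivAt_id t).const_mul 5).add_const 1)).div
      (((hasDerivAt_id t).const_mul 2).mul ((hasDerivAt_id t).add_const 2)) hden)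
  refine h.congr_deriv ?_
  simp only [id, Pi.mul_apply]
  field_simp
  ring

open Set in
lemma sub_one_mul_div_le_log {t : ℝ} (ht : 0 < t) :
    (t - 1) * (5 * t + 1) / (2 * t * (t + 2)) ≤ log t := by
  set f : ℝ → ℝ := fun s => log s - (s - 1) * (5 * s + 1) / (2 * s * (s + 2)) with hf
  have hf' : ∀ s : ℝ, 0 < s → HasDerivAt f ((s - 1) ^ 3 / (s ^ 2 * (s + 2) ^ 2)) s :=
    fun s hs => hasDerivAt_log_sub_rational hs
  have hd : DifferentiableOn ℝ f (Ioi 0) :=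
    fun s hs => (hf' s hs).differentiableAt.differentiableWithinAt
  have hmin : IsMinOn f (Ioi 0) 1 := by
    refine isMinOn_Ioi_of_deriv (hf' 1 one_pos).continuousAt
      (hd.mono Ioo_subset_Ioi_self) (hd.mono (Ioi_subset_Ioi zero_le_one)) ?_ ?_
    · intro s hs
      rw [(hf' s hs.1).deriv]
      have : (s - 1) ^ 3 ≤ 0 := by nlinarith [hs.2, sq_nonneg (s - 1)]
      exact div_nonpos_of_nonpos_of_nonneg this (by positivity)
    · intro s hs
      rw [(hf' s (one_pos.trans hs)).deriv]
      have : 0 ≤ (s - 1) ^ 3 := pow_nonneg (sub_nonneg.2 hs.le) 3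
      positivity
  have := hmin ht
  norm_num [hf] at this
  linarith

lemma sq_sub_div_le_mul_log_div_add_sub {a b : ℝ} (ha : 0 ≤ a) (hb : 0 < b) :
    (a - b) ^ 2 / (2 * (a + 2 * b) / 3) ≤ a * log (a / b) + b - a := by
  rcases ha.eq_or_lt with rfl | ha
  · rw [div_le_iff₀ (by positivity)]
    nlinarith
  · have hlog := sub_one_mul_div_le_log (div_pos ha hb)
    have hsubst : (a / b - 1) * (5 * (a / b) + 1) / (2 * (a / b) * (a / b + 2))
        = (a - b) * (5 * a + b) / (2 * a * (a + 2 * b)) := by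
      field_simp
    rw [hsubst, div_le_iff₀ (by positivity)] at hlog
    rw [div_le_iff₀ (by positivity)]
    nlinarith

theorem sq_sum_abs_sub_le_two_mul_relEntropy {ι : Type*} [Fintype ι] {p q : ι → ℝ}
    (hp : ∀ i, 0 ≤ p i) (hq : ∀ i, 0 < q i) (hp1 : ∑ i, p i = 1) (hq1 : ∑ i, q i = 1) :
    (∑ i, |q i - p i|) ^ 2 ≤ 2 * relEntropy p q := by
  have hw : ∀ i ∈ univ, 0 < 2 * (p i + 2 * q i) / 3 := fun i _ => by
    have := hp i; have := hq i; positivity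
  have hw2 : ∑ i, 2 * (p i + 2 * q i) / 3 = 2 := by
    simp only [← sum_div, ← mul_sum, sum_add_distrib, hp1, hq1]; norm_num
  have hsed := sq_sum_div_le_sum_sq_div univ (fun i => |q i - p i|) hw
  simp only [sq_abs, hw2] at hsed
  calc (∑ i, |q i - p i|) ^ 2 ≤ 2 * ∑ i, (q i - p i) ^ 2 / (2 * (p i + 2 * q i) / 3) := by
        linarith
    _ ≤ 2 * ∑ i, (p i * log (p i / q i) + q i - p i) := by
        gcongr with i
        rw [← neg_sub, neg_sq]
        exact sq_sub_div_le_mul_log_div_add_sub (hp i) (hq i)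
    _ = 2 * relEntropy p q := by
        simp only [relEntropy, sum_sub_distrib, sum_add_distrib, hp1, hq1, add_sub_cancel_right]

lemma rowRes_mul_div_colSum_le {n : ℕ} (r c : Fin n → ℝ) (P : Matrix (Fin n) (Fin n) ℝ)
    (hP : ∀ i j, 0 ≤ P i j) (hτ : ∀ j, 0 < ∑ i, P i j) :
    rowRes r (fun i j => P i j * (c j / ∑ i', P i' j)) ≤ rowRes r P + colRes c P := by
  have hrow : ∀ i, |∑ j, P i j * (c j / ∑ i', P i' j) - r i|
      ≤ ∑ j, P i j * |c j / (∑ i', P i' j) - 1| + |∑ j, P i j - r i| := by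
    intro i
    have hsplit : ∑ j, P i j * (c j / ∑ i', P i' j) - r i
        = ∑ j, P i j * (c j / (∑ i', P i' j) - 1) + (∑ j, P i j - r i) := by
      simp only [mul_sub, mul_one, sum_sub_distrib]
      ring
    rw [hsplit]
    refine (abs_add_le _ _).trans (add_le_add_left ((abs_sum_le_sum_abs _ _).trans ?_) _)
    simp only [abs_mul, abs_of_nonneg (hP i _), le_refl]
  have hcol : ∀ j, ∑ i, P i j * |c j / (∑ i', P i' j) - 1| = |∑ i, P i j - c j| := by
    intro j
    rw [← sum_mul, ← abs_of_pos (hτ j), ← abs_mul, abs_of_pos (hτ j), mul_sub,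
      mul_div_cancel₀ _ (hτ j).ne', mul_one, abs_sub_comm]
  calc rowRes r (fun i j => P i j * (c j / ∑ i', P i' j))
      ≤ ∑ i, (∑ j, P i j * |c j / (∑ i', P i' j) - 1| + |∑ j, P i j - r i|) :=
        sum_le_sum fun i _ => hrow i
    _ = rowRes r P + colRes c P := by
        rw [sum_add_distrib, sum_comm, add_comm]
        simp only [hcol, rowRes, colRes]

section Sinkhorn

variable {n d k : ℕ} {η : ℝ} {κ : Matrix (Fin n) (Fin n) ℝ} {r c : Fin n → ℝ}
  {x y : Fin n → Fin d → ℝ} {U : Matrix (Fin d) (Fin k) ℝ} {α α' β β' : Fin n → ℝ}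

lemma costCU_swap (i j : Fin n) : costCU y x U j i = costCU x y U i j := by
  unfold costCU projSq
  refine sum_congr rfl fun m _ => ?_
  rw [← neg_sq, ← sum_neg_distrib]
  congr 2
  ext l
  ring

lemma zeta_transpose : zeta η κᵀ y x β α U = (zeta η κ x y α β U)ᵀ := by
  ext j i
  simp only [zeta, phi, transpose_apply, costCU_swap, add_comm (β j)]

lemma l1norm_transpose (A : Matrix (Fin n) (Fin n) ℝ) : l1norm Aᵀ = l1norm A :=
  sum_comm

lemma Lfun_transpose : Lfun η κᵀ c r y x β α U = Lfun η κ r c x y α β U := by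
  simp only [Lfun, zeta_transpose, l1norm_transpose, add_comm (∑ i, c i * β i)]

lemma piEta_transpose : piEta η κᵀ y x β α U = (piEta η κ x y α β U)ᵀ := by
  ext j i
  simp only [piEta, zeta_transpose, l1norm_transpose, transpose_apply]

lemma zeta_pos (hκ : ∀ i j, 0 < κ i j) (i j : Fin n) : 0 < zeta η κ x y α β U i j :=
  mul_pos (hκ i j) (exp_pos _)

lemma l1norm_zeta (hκ : ∀ i j, 0 < κ i j) :
    l1norm (zeta η κ x y α β U) = ∑ i, ∑ j, zeta η κ x y α β U i j :=
  sum_congr rfl fun i _ => sum_congr rfl fun j _ => abs_of_pos (zeta_pos hκ i j)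

lemma l1norm_zeta_pos [NeZero n] (hκ : ∀ i j, 0 < κ i j) : 0 < l1norm (zeta η κ x y α β U) := by
  rw [l1norm_zeta hκ]
  exact sum_pos (fun i _ => sum_pos (fun j _ => zeta_pos hκ i j) univ_nonempty) univ_nonempty

lemma piEta_pos [NeZero n] (hκ : ∀ i j, 0 < κ i j) (i j : Fin n) :
    0 < piEta η κ x y α β U i j :=
  div_pos (zeta_pos hκ i j) (l1norm_zeta_pos hκ)

lemma sum_sum_piEta [NeZero n] (hκ : ∀ i j, 0 < κ i j) :
    ∑ i, ∑ j, piEta η κ x y α β U i j = 1 := by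
  simp only [piEta, ← sum_div, ← l1norm_zeta hκ]
  exact div_self (l1norm_zeta_pos hκ).ne'

lemma zeta_row_update (hκ : ∀ i j, 0 < κ i j) (hη : η ≠ 0) (hr : ∀ i, 0 < r i)
    (hα' : ∀ i, α' i = α i - η * log (r i) + η * log (∑ j, zeta η κ x y α β U i j))
    (i j : Fin n) :
    zeta η κ x y α' β U i j = r i / (∑ j', zeta η κ x y α β U i j') * zeta η κ x y α β U i j := by
  have hS : 0 < ∑ j', zeta η κ x y α β U i j' :=
    sum_pos (fun j' _ => zeta_pos hκ i j') ⟨j, mem_univ j⟩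
  have harg : -phi x y α' β U i j / η
      = -phi x y α β U i j / η + (log (r i) - log (∑ j', zeta η κ x y α β U i j')) := by
    simp only [phi, hα' i]
    field_simp
    ring
  rw [show zeta η κ x y α' β U i j = κ i j * exp (-phi x y α' β U i j / η) from rfl, harg,
    exp_add, exp_sub, exp_log (hr i), exp_log hS]
  simp only [zeta]
  ring

lemma sum_zeta_row_update (hκ : ∀ i j, 0 < κ i j) (hη : η ≠ 0) (hr : ∀ i, 0 < r i)
    (hα' : ∀ i, α' i = α i - η * log (r i) + η * log (∑ j, zeta η κ x y α β U i j))
    (i : Fin n) : ∑ j, zeta η κ x y α' β U i j = r i := by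
  have hS : 0 < ∑ j', zeta η κ x y α β U i j' :=
    sum_pos (fun j' _ => zeta_pos hκ i j') ⟨i, mem_univ i⟩
  simp only [zeta_row_update hκ hη hr hα', ← mul_sum, div_mul_cancel₀ _ hS.ne']

lemma l1norm_zeta_row_update (hκ : ∀ i j, 0 < κ i j) (hη : η ≠ 0) (hr : inSimplex r)
    (hα' : ∀ i, α' i = α i - η * log (r i) + η * log (∑ j, zeta η κ x y α β U i j)) :
    l1norm (zeta η κ x y α' β U) = 1 := by
  simp only [l1norm_zeta hκ, sum_zeta_row_update hκ hη hr.2 hα', hr.1]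

lemma rowRes_piEta_row_update (hκ : ∀ i j, 0 < κ i j) (hη : η ≠ 0) (hr : inSimplex r)
    (hα' : ∀ i, α' i = α i - η * log (r i) + η * log (∑ j, zeta η κ x y α β U i j)) :
    rowRes r (piEta η κ x y α' β U) = 0 := by
  simp only [rowRes, piEta, l1norm_zeta_row_update hκ hη hr hα', div_one,
    sum_zeta_row_update hκ hη hr.2 hα', sub_self, abs_zero, sum_const_zero]

lemma Lfun_row_update [NeZero n] (hκ : ∀ i j, 0 < κ i j) (hη : η ≠ 0) (hr : inSimplex r)
    (hα' : ∀ i, α' i = α i - η * log (r i) + η * log (∑ j, zeta η κ x y α β U i j)) :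
    Lfun η κ r c x y α' β U = Lfun η κ r c x y α β U
      - η * relEntropy r (fun i => ∑ j, piEta η κ x y α β U i j) := by
  have hZ : 0 < l1norm (zeta η κ x y α β U) := l1norm_zeta_pos hκ
  have hterm : ∀ i, r i * α' i = r i * α i
      - η * (r i * log (r i / ∑ j, piEta η κ x y α β U i j))
      + η * log (l1norm (zeta η κ x y α β U)) * r i := by
    intro i
    have hS : 0 < ∑ j, zeta η κ x y α β U i j :=
      sum_pos (fun j _ => zeta_pos hκ i j) univ_nonempty
    simp only [piEta, ← sum_div]
    rw [hα' i, log_div (hr.2 i).ne' (div_pos hS hZ).ne', log_div hS.ne' hZ.ne']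
    ring
  simp only [Lfun, relEntropy, l1norm_zeta_row_update hκ hη hr hα', log_one, mul_zero,
    add_zero, sum_congr rfl fun i _ => hterm i, sum_add_distrib, sum_sub_distrib, ← mul_sum,
    hr.1]
  ring

lemma zeta_col_update (hκ : ∀ i j, 0 < κ i j) (hη : η ≠ 0) (hc : ∀ j, 0 < c j)
    (hβ' : ∀ j, β' j = β j - η * log (c j) + η * log (∑ i, zeta η κ x y α β U i j))
    (i j : Fin n) :
    zeta η κ x y α β' U i j = zeta η κ x y α β U i j * (c j / ∑ i', zeta η κ x y α β U i' j) := by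
  have h := zeta_row_update (κ := κᵀ) (x := y) (y := x) (α := β) (α' := β') (β := α) (U := U)
    (fun j i => hκ i j) hη hc (by simpa only [zeta_transpose, transpose_apply] using hβ') j i
  simp only [zeta_transpose, transpose_apply] at h
  rw [h, mul_comm]

lemma l1norm_zeta_col_update (hκ : ∀ i j, 0 < κ i j) (hη : η ≠ 0) (hc : inSimplex c)
    (hβ' : ∀ j, β' j = β j - η * log (c j) + η * log (∑ i, zeta η κ x y α β U i j)) :
    l1norm (zeta η κ x y α β' U) = 1 := by
  rw [← l1norm_transpose, ← zeta_transpose]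
  exact l1norm_zeta_row_update (fun j i => hκ i j) hη hc
    (by simpa only [zeta_transpose, transpose_apply] using hβ')

lemma Lfun_col_update [NeZero n] (hκ : ∀ i j, 0 < κ i j) (hη : η ≠ 0) (hc : inSimplex c)
    (hβ' : ∀ j, β' j = β j - η * log (c j) + η * log (∑ i, zeta η κ x y α β U i j)) :
    Lfun η κ r c x y α β' U = Lfun η κ r c x y α β U
      - η * relEntropy c (fun j => ∑ i, piEta η κ x y α β U i j) := by
  have h := Lfun_row_update (κ := κᵀ) (x := y) (y := x) (r := c) (c := r) (α := β) (α' := β')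
    (β := α) (U := U) (fun j i => hκ i j) hη hc
    (by simpa only [zeta_transpose, transpose_apply] using hβ')
  simpa only [Lfun_transpose, piEta_transpose, transpose_apply] using h

lemma rowRes_piEta_col_update_le [NeZero n] (hκ : ∀ i j, 0 < κ i j) (hη : η ≠ 0)
    (hc : inSimplex c)
    (hβ' : ∀ j, β' j = β j - η * log (c j) + η * log (∑ i, zeta η κ x y α β U i j)) :
    rowRes r (piEta η κ x y α β' U)
      ≤ rowRes r (piEta η κ x y α β U) + colRes c (piEta η κ x y α β U) := by
  have hZ : 0 < l1norm (zeta η κ x y α β U) := l1norm_zeta_pos hκ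
  have hscale : piEta η κ x y α β' U = fun i j => piEta η κ x y α β U i j
      * (c j / ∑ i', piEta η κ x y α β U i' j) := by
    ext i j
    simp only [piEta, l1norm_zeta_col_update hκ hη hc hβ', div_one,
      zeta_col_update hκ hη hc.2 hβ', ← sum_div]
    field_simp
  rw [hscale]
  exact rowRes_mul_div_colSum_le r c _ (fun i j => (piEta_pos hκ i j).le)
    fun j => sum_pos (fun i _ => piEta_pos hκ i j) univ_nonempty

end Sinkhorn

/-- Lemma 4.2: sufficient decrease of `L_η` in `(α, β)` under the
Sinkhorn iteration. -/
theorem statement10 (n d k : ℕ) (η : ℝ) (hη : 0 < η)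
    (κ : Matrix (Fin n) (Fin n) ℝ) (hκ : ∀ i j, 0 < κ i j)
    (r c : Fin n → ℝ) (hr : inSimplex r) (hc : inSimplex c)
    (x y : Fin n → Fin d → ℝ) (U : Matrix (Fin d) (Fin k) ℝ)
    (α β : ℕ → Fin n → ℝ)
    (hα : ∀ (ℓ : ℕ) (i : Fin n), α (ℓ + 1) i = α ℓ i - η * Real.log (r i)
        + η * Real.log (∑ j, zeta η κ x y (α ℓ) (β ℓ) U i j))
    (hβ : ∀ (ℓ : ℕ) (j : Fin n), β (ℓ + 1) j = β ℓ j - η * Real.log (c j)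
        + η * Real.log (∑ i, zeta η κ x y (α (ℓ + 1)) (β ℓ) U i j)) :
    ∀ ℓ : ℕ, Lfun η κ r c x y (α (ℓ + 1)) (β (ℓ + 1)) U
      ≤ Lfun η κ r c x y (α ℓ) (β ℓ) U
        - (η / 2) * ((rowRes r (piEta η κ x y (α ℓ) (β ℓ) U)) ^ 2
            + (rowRes r (piEta η κ x y (α (ℓ + 1)) (β (ℓ + 1)) U)) ^ 2) := by
  intro ℓ
  have : NeZero n := ⟨by rintro rfl; simp [inSimplex] at hr⟩
  set π₀ := piEta η κ x y (α ℓ) (β ℓ) U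
  set π₁ := piEta η κ x y (α (ℓ + 1)) (β ℓ) U
  have hL₁ := Lfun_row_update (c := c) hκ hη.ne' hr (hα ℓ)
  have hL₂ := Lfun_col_update (r := r) hκ hη.ne' hc (hβ ℓ)
  have hres₁ : rowRes r π₁ = 0 := rowRes_piEta_row_update hκ hη.ne' hr (hα ℓ)
  have hres₂ := rowRes_piEta_col_update_le (r := r) hκ hη.ne' hc (hβ ℓ)
  have hpinsker₀ : rowRes r π₀ ^ 2 ≤ 2 * relEntropy r (fun i => ∑ j, π₀ i j) :=
    sq_sum_abs_sub_le_two_mul_relEntropy (fun i => (hr.2 i).le)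
      (fun i => sum_pos (fun j _ => piEta_pos hκ i j) univ_nonempty) hr.1 (sum_sum_piEta hκ)
  have hpinsker₁ : colRes c π₁ ^ 2 ≤ 2 * relEntropy c (fun j => ∑ i, π₁ i j) :=
    sq_sum_abs_sub_le_two_mul_relEntropy (fun j => (hc.2 j).le)
      (fun j => sum_pos (fun i _ => piEta_pos hκ i j) univ_nonempty) hc.1
      (sum_comm.trans (sum_sum_piEta hκ))
  have hres : rowRes r (piEta η κ x y (α (ℓ + 1)) (β (ℓ + 1)) U) ^ 2 ≤ colRes c π₁ ^ 2 :=
    pow_le_pow_left₀ (sum_nonneg fun i _ => abs_nonneg _) (by linarith) 2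
  rw [hL₂, hL₁]
  linarith [mul_le_mul_of_nonneg_left (add_le_add hpinsker₀ (hres.trans hpinsker₁)) hη.le]

end PRWPaper
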